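/- A solution satisfies independent indirect liabilities and implements efficient investments if and only if it equals φ*. -/

import Mathlib

open Finset

/-!
For consecutive agents `i ⋖ k`, independence lets agent `k`'s balance condition be subtracted
from agent `i`'s, leaving `φ(i,k) = ℓ_i + φ(k,k) − φ(i,i)`. The efficient direct liabilities
satisfy `φ*(i,i) = ℓ_i + a_k φ*(k,k)`, so with efficient direct liabilities
`φ(i,k) = (1 − a_k) φ*(k,k)`; independence propagates this to every `i < k`.
-/

section Liability

variable {ι R : Type*} [Fintype ι] [LinearOrder ι] [CommRing R]

def HasIndependentIndirectLiabilities (φ : ι → ι → R) : Prop :=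
  ∀ i j k, i < j → j < k → φ i k = φ j k

/-- The direct liability `φ*(i,i)` implementing the efficient profile, with `a j = p_j(x*_j)`. -/
def efficientDirectLiability (ℓ a : ι → R) (i : ι) : R :=
  ℓ i + ∑ k ∈ univ.filter (fun k => i < k),
    (∏ j ∈ univ.filter (fun j => i < j ∧ j ≤ k), a j) * ℓ k

theorem sum_filter_le_eq_add_sum_filter_lt (f : ι → R) (i : ι) :
    ∑ j ∈ univ.filter (fun j => i ≤ j), f j = f i + ∑ j ∈ univ.filter (fun j => i < j), f j := by
  have hset : univ.filter (fun j => i ≤ j) = insert i (univ.filter (fun j => i < j)) := by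
    ext j
    simp [le_iff_eq_or_lt, eq_comm]
  rw [hset, sum_insert (by simp)]

theorem filter_lt_eq_filter_le_of_covBy {i k : ι} (h : i ⋖ k) :
    univ.filter (fun j => i < j) = univ.filter (fun j => k ≤ j) :=
  filter_congr fun _ _ => h.lt_iff_le_right

theorem efficientDirectLiability_eq_of_covBy (ℓ a : ι → R) {i k : ι} (h : i ⋖ k) :
    efficientDirectLiability ℓ a i = ℓ i + a k * efficientDirectLiability ℓ a k := by
  have hprod : ∀ m, k ≤ m → ∏ j ∈ univ.filter (fun j => i < j ∧ j ≤ m), a j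
      = a k * ∏ j ∈ univ.filter (fun j => k < j ∧ j ≤ m), a j := by
    intro m hkm
    have hset : univ.filter (fun j => i < j ∧ j ≤ m)
        = insert k (univ.filter (fun j => k < j ∧ j ≤ m)) := by
      ext j
      simp only [mem_filter, mem_univ, true_and, mem_insert, h.lt_iff_le_right,
        le_iff_eq_or_lt (a := k)]
      constructor
      · rintro ⟨rfl | hkj, hjm⟩ <;> simp_all
      · rintro (rfl | ⟨hkj, hjm⟩) <;> simp_all
    rw [hset, prod_insert (by simp)]
  have hterms : ∑ m ∈ univ.filter (fun m => k ≤ m),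
      (∏ j ∈ univ.filter (fun j => i < j ∧ j ≤ m), a j) * ℓ m
      = a k * ∑ m ∈ univ.filter (fun m => k ≤ m),
          (∏ j ∈ univ.filter (fun j => k < j ∧ j ≤ m), a j) * ℓ m := by
    rw [mul_sum]
    refine sum_congr rfl fun m hm => ?_
    rw [hprod m (mem_filter.mp hm).2, mul_assoc]
  have hempty : univ.filter (fun j => k < j ∧ j ≤ k) = ∅ :=
    filter_false_of_mem fun j _ hj => hj.1.not_ge hj.2
  unfold efficientDirectLiability
  rw [filter_lt_eq_filter_le_of_covBy h, hterms, sum_filter_le_eq_add_sum_filter_lt, hempty,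
    prod_empty, one_mul]

variable {ℓ : ι → R} {φ : ι → ι → R}

theorem indirectLiability_eq_of_covBy
    (hbalance : ∀ i, ∑ j ∈ univ.filter (fun j => i ≤ j), φ i j
      = ∑ j ∈ univ.filter (fun j => i ≤ j), ℓ j)
    (hind : HasIndependentIndirectLiabilities φ) {i k : ι} (h : i ⋖ k) :
    φ i k = ℓ i + φ k k - φ i i := by
  have hbal_i := hbalance i
  have hbal_k := hbalance k
  have hshift : ∑ j ∈ univ.filter (fun j => k < j), φ i j
      = ∑ j ∈ univ.filter (fun j => k < j), φ k j :=
    sum_congr rfl fun j hj => hind i k j h.lt (mem_filter.mp hj).2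
  simp only [sum_filter_le_eq_add_sum_filter_lt _ i, filter_lt_eq_filter_le_of_covBy h,
    sum_filter_le_eq_add_sum_filter_lt _ k, hshift] at hbal_i
  rw [sum_filter_le_eq_add_sum_filter_lt, sum_filter_le_eq_add_sum_filter_lt] at hbal_k
  linear_combination hbal_i - hbal_k

theorem indirectLiability_eq_of_efficient [WellFoundedGT ι] (a : ι → R)
    (hbalance : ∀ i, ∑ j ∈ univ.filter (fun j => i ≤ j), φ i j
      = ∑ j ∈ univ.filter (fun j => i ≤ j), ℓ j)
    (hind : HasIndependentIndirectLiabilities φ)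
    (hdiag : ∀ i, φ i i = efficientDirectLiability ℓ a i) {i k : ι} (hik : i < k) :
    φ i k = (1 - a k) * efficientDirectLiability ℓ a k := by
  obtain ⟨i₀, hii₀, hcov⟩ := exists_le_covBy_of_lt hik
  have hshift : φ i k = φ i₀ k := by
    rcases hii₀.eq_or_lt with rfl | hlt
    · rfl
    · exact hind i i₀ k hlt hcov.lt
  rw [hshift, indirectLiability_eq_of_covBy hbalance hind hcov, hdiag, hdiag,
    efficientDirectLiability_eq_of_covBy ℓ a hcov]
  ring

end Liability

theorem stmt_15_general (n : ℕ) (ℓ : Fin n → ℝ) (a : Fin n → ℝ)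
    (φ φstar : Fin n → Fin n → ℝ)
    -- φ is a solution: nonnegative, balanced, zero liability for earlier agents
    (hzero : ∀ i j : Fin n, j < i → φ i j = 0)
    (hbalance : ∀ i : Fin n,
      ∑ j ∈ univ.filter (fun j => i ≤ j), φ i j = ∑ j ∈ univ.filter (fun j => i ≤ j), ℓ j)
    -- definition of φ*
    (hstar_diag : ∀ i : Fin n, φstar i i = ℓ i +
      ∑ k ∈ univ.filter (fun k => i < k),
        (∏ j ∈ univ.filter (fun j => i < j ∧ j ≤ k), a j) * ℓ k)
    (hstar_off : ∀ i k : Fin n, i < k → φstar i k = (1 - a k) * φstar k k)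
    (hstar_zero : ∀ i k : Fin n, k < i → φstar i k = 0) :
    ((∀ i j k : Fin n, i < j → j < k → φ i k = φ j k) ∧
      (∀ i : Fin n, φ i i = ℓ i +
        ∑ k ∈ univ.filter (fun k => i < k),
          (∏ j ∈ univ.filter (fun j => i < j ∧ j ≤ k), a j) * ℓ k)) ↔
    φ = φstar := by
  constructor
  · rintro ⟨hind, hdiag⟩
    funext i k
    rcases lt_trichotomy i k with hik | rfl | hki
    · rw [hstar_off i k hik, hstar_diag k]
      exact indirectLiability_eq_of_efficient a hbalance hind hdiag hik
    · rw [hdiag, hstar_diag]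
    · rw [hzero i k hki, hstar_zero i k hki]
  · rintro rfl
    exact ⟨fun i j k hij hjk => by rw [hstar_off i k (hij.trans hjk), hstar_off j k hjk],
      hstar_diag⟩

/-- Proposition 4: A solution φ satisfies independent indirect
liabilities and implements efficient investments (equivalently, by Theorem 1, has
the first-best direct liabilities) if and only if φ = φ*, where φ* is defined by
the first-best direct liabilities and φ*(i,k) = (1 − a_k)·φ*(k,k) for i < k,
with a_j = p_j(x*_j) ∈ (0,1). -/
theorem stmt_15 (n : ℕ) (ℓ : Fin n → ℝ) (a : Fin n → ℝ)
    (φ φstar : Fin n → Fin n → ℝ)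
    (hℓ : ∀ j, 0 < ℓ j)
    (ha : ∀ j, a j ∈ Set.Ioo (0:ℝ) 1)
    -- φ is a solution: nonnegative, balanced, zero liability for earlier agents
    (hnonneg : ∀ i j, 0 ≤ φ i j)
    (hzero : ∀ i j : Fin n, j < i → φ i j = 0)
    (hbalance : ∀ i : Fin n,
      ∑ j ∈ univ.filter (fun j => i ≤ j), φ i j = ∑ j ∈ univ.filter (fun j => i ≤ j), ℓ j)
    -- definition of φ*
    (hstar_diag : ∀ i : Fin n, φstar i i = ℓ i +
      ∑ k ∈ univ.filter (fun k => i < k),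
        (∏ j ∈ univ.filter (fun j => i < j ∧ j ≤ k), a j) * ℓ k)
    (hstar_off : ∀ i k : Fin n, i < k → φstar i k = (1 - a k) * φstar k k)
    (hstar_zero : ∀ i k : Fin n, k < i → φstar i k = 0) :
    ((∀ i j k : Fin n, i < j → j < k → φ i k = φ j k) ∧
      (∀ i : Fin n, φ i i = ℓ i +
        ∑ k ∈ univ.filter (fun k => i < k),
          (∏ j ∈ univ.filter (fun j => i < j ∧ j ≤ k), a j) * ℓ k)) ↔
    φ = φstar :=
  stmt_15_general n ℓ a φ φstar hzero hbalance hstar_diag hstar_off hstar_zero
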